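/- Assume additionally that O_t(o|s) > 0 for every t ∈ {2,…,H+1}, o ∈ O, s ∈ S. For h ∈ {1,…,H+1} and an observable history f_h, define V*_h(f_h) := max over all deterministic policies π of V^π_h(f_h) (a maximum over a finite set). Then the Bellman optimality equations hold: V*_{H+1}(f_{H+1}) = (1/γ)·ln ∑_{s∈S} σ_{H+1}(s; f_{H+1}) for every f_{H+1}, and for every h ∈ {1,…,H} and every observable history f_h, V*_h(f_h) = max_{a∈A} (1/γ)·ln ∑_{o∈O} O'(o)·exp(γ·V*_{h+1}(f_h, a, o)). In particular, a greedy deterministic history-dependent policy attains the globally optimal value. -/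

import Mathlib

open Finset

noncomputable section

variable {S O A : Type*}

/-- Truncation of a sequence: keep the first `n` values, fill the rest with junk. -/
def truncSeq {X : Type*} [Nonempty X] (f : ℕ → X) (n : ℕ) : ℕ → X :=
  fun t => if t < n then f t else Classical.arbitrary X

/-- Action sequence generated by a policy `π` from observations `obs`, keeping the
prescribed actions `acts` at indices `< n₀`.  At step `n`, the policy only sees the
actions at indices `< n` and the observations at indices `< n`. -/
def genAct [Nonempty A] [Nonempty O] (π : ℕ → (ℕ → A) → (ℕ → O) → A)
    (acts : ℕ → A) (obs : ℕ → O) (n₀ : ℕ) : ℕ → A :=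
  fun n => Nat.strongRecOn n (fun n ih =>
    if n < n₀ then acts n
    else π n (fun t => if ht : t < n then ih t ht else Classical.arbitrary A)
             (fun t => if t < n then obs t else Classical.arbitrary O))

/-- The action chosen by the policy `π` at step `m` given the observable history
recorded in `acts` (indices `< m`) and `obs` (indices `< m`). -/
def polAct [Nonempty A] [Nonempty O] (π : ℕ → (ℕ → A) → (ℕ → O) → A)
    (acts : ℕ → A) (obs : ℕ → O) (m : ℕ) : A :=
  π m (truncSeq acts m) (truncSeq obs m)

/-- Splicing a tail of `k` observations after the first `m` observations of `obs`. -/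
def splice [Nonempty O] (obs : ℕ → O) (m : ℕ) {k : ℕ} (tail : Fin k → O) : ℕ → O :=
  fun t => if t < m then obs t
    else if h : t - m < k then tail ⟨t - m, h⟩ else Classical.arbitrary O

/-- The (unnormalized) risk belief `σ_{n+1}(s; f_{n+1})` (paper index `h = n+1`). -/
def riskBelief [Fintype S] (μ : S → ℝ) (Ttr : ℕ → A → S → S → ℝ)
    (Oem : ℕ → O → S → ℝ) (Oref : O → ℝ) (rew : ℕ → S → A → ℝ) (γ : ℝ)
    (n : ℕ) (acts : ℕ → A) (obs : ℕ → O) (s : S) : ℝ :=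
  ∑ p : Fin n → S,
    let q : Fin (n + 1) → S := Fin.snoc p s
    (μ (q 0) * ∏ t : Fin n, Ttr t (acts t) (q t.castSucc) (q t.succ)) *
      ((∏ t : Fin n, (Oem t (obs t) (q t.succ) / Oref (obs t))) *
        Real.exp (γ * ∑ t : Fin n, rew t (q t.castSucc) (acts t)))

/-- The raw value `∑_{o_{h+1:H+1}} (∏ O'(o_t)) ∑_s σ_{H+1}(s; f_{H+1})` at
step `h = m + 1`; the value function is `V^π_h(f_h) = (1/γ)·ln` of this quantity. -/
def valueRaw [Fintype S] [Fintype O] [Nonempty A] [Nonempty O]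
    (μ : S → ℝ) (Ttr : ℕ → A → S → S → ℝ) (Oem : ℕ → O → S → ℝ) (Oref : O → ℝ)
    (rew : ℕ → S → A → ℝ) (γ : ℝ) (H : ℕ)
    (π : ℕ → (ℕ → A) → (ℕ → O) → A)
    (m : ℕ) (acts : ℕ → A) (obs : ℕ → O) : ℝ :=
  ∑ tail : Fin (H - m) → O,
    (∏ j, Oref (tail j)) *
      ∑ s : S, riskBelief μ Ttr Oem Oref rew γ H
        (genAct π acts (splice obs m tail) m) (splice obs m tail) s

/-!
Splitting off the first observation of the remaining tail factors the raw value as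
`∑_o O'(o) · exp (γ · V^π_{h+1}(f_h, π_h(f_h), o))`, so `V^π_h` is the risk-sensitive backup
`x ↦ (1/γ) ln ∑_o O'(o) exp (γ x_o)` of `V^π_{h+1}`. This backup is monotone for either sign of `γ`,
hence backward induction shows that the recursively defined optimal value `V*` dominates every
`V^π` and is attained by the policy that is greedy with respect to `V*`. Positive emissions make
every raw value positive, which is what lets `exp ∘ (γ ·) ∘ (1/γ) ln` cancel.
-/

open Function

section Sequences

variable [Nonempty A] [Nonempty O]

lemma genAct_apply (π : ℕ → (ℕ → A) → (ℕ → O) → A) (acts : ℕ → A) (obs : ℕ → O) (n₀ n : ℕ) :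
    genAct π acts obs n₀ n =
      if n < n₀ then acts n
      else π n (fun t => if t < n then genAct π acts obs n₀ t else Classical.arbitrary A)
        (truncSeq obs n) :=
  Nat.strongRecOn_eq _ n

lemma genAct_of_lt (π : ℕ → (ℕ → A) → (ℕ → O) → A) (acts : ℕ → A) (obs : ℕ → O) {n₀ n : ℕ}
    (h : n < n₀) : genAct π acts obs n₀ n = acts n := by
  rw [genAct_apply, if_pos h]

lemma truncSeq_congr {X : Type*} [Nonempty X] {f g : ℕ → X} {n : ℕ}
    (h : ∀ t < n, f t = g t) : truncSeq f n = truncSeq g n := by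
  funext t
  by_cases ht : t < n <;> simp [truncSeq, ht, h]

lemma truncSeq_of_lt {X : Type*} [Nonempty X] (f : ℕ → X) (n : ℕ) : ∀ t < n, truncSeq f n t = f t :=
  fun _ ht => if_pos ht

lemma genAct_update_polAct (π : ℕ → (ℕ → A) → (ℕ → O) → A) (acts : ℕ → A) (obs : ℕ → O)
    (m : ℕ) :
    genAct π (update acts m (polAct π acts obs m)) obs (m + 1) = genAct π acts obs m := by
  funext n
  induction n using Nat.strongRecOn with
  | ind n ih =>
    rw [genAct_apply, genAct_apply]
    rcases lt_trichotomy n m with h | rfl | h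
    · rw [if_pos (by omega), if_pos h, update_of_ne h.ne]
    · rw [if_pos n.lt_succ_self, if_neg n.lt_irrefl, update_self, polAct]
      congr 1
      exact truncSeq_congr fun t ht => (genAct_of_lt _ _ _ ht).symm
    · rw [if_neg (by omega), if_neg (by omega)]
      congr 1
      funext t
      split_ifs with ht
      exacts [ih t ht, rfl]

lemma splice_of_lt (obs : ℕ → O) (m : ℕ) {k : ℕ} (tail : Fin k → O) {t : ℕ} (h : t < m) :
    splice obs m tail t = obs t := by
  simp [splice, h]

lemma splice_cons (obs : ℕ → O) (m k : ℕ) (o : O) (tail : Fin k → O) :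
    splice obs m (Fin.cons o tail : Fin (k + 1) → O) = splice (update obs m o) (m + 1) tail := by
  funext t
  unfold splice
  rcases lt_trichotomy t m with h | rfl | h
  · rw [if_pos h, if_pos (by omega), update_of_ne h.ne]
  · rw [if_neg t.lt_irrefl, if_pos t.lt_succ_self, update_self, dif_pos (by omega)]
    simp
  · rw [if_neg (by omega), if_neg (by omega)]
    by_cases hk : t - (m + 1) < k
    · rw [dif_pos (by omega), dif_pos hk]
      convert Fin.cons_succ (α := fun _ => O) o tail ⟨t - (m + 1), hk⟩ using 2
      ext
      simp only [Fin.val_succ]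
      omega
    · rw [dif_neg (by omega), dif_neg hk]

end Sequences

lemma exists_pos_of_sum_eq_one {ι : Type*} [Fintype ι] {f : ι → ℝ} (hf : ∑ i, f i = 1) :
    ∃ i, 0 < f i := by
  simpa using exists_lt_of_sum_lt (s := univ) (f := 0) (g := f) (by simp [hf])

section Model

variable {μ : S → ℝ} {Ttr : ℕ → A → S → S → ℝ} {Oem : ℕ → O → S → ℝ}
  {Oref : O → ℝ} {rew : ℕ → S → A → ℝ} {γ : ℝ}

variable (μ Ttr Oem Oref rew γ) in
def pathWeight {n : ℕ} (acts : ℕ → A) (obs : ℕ → O) (q : Fin (n + 1) → S) : ℝ :=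
  (μ (q 0) * ∏ t : Fin n, Ttr t (acts t) (q t.castSucc) (q t.succ)) *
    ((∏ t : Fin n, (Oem t (obs t) (q t.succ) / Oref (obs t))) *
      Real.exp (γ * ∑ t : Fin n, rew t (q t.castSucc) (acts t)))

lemma riskBelief_eq_sum_pathWeight [Fintype S] (n : ℕ) (acts : ℕ → A) (obs : ℕ → O) (s : S) :
    riskBelief μ Ttr Oem Oref rew γ n acts obs s =
      ∑ p : Fin n → S, pathWeight μ Ttr Oem Oref rew γ acts obs (Fin.snoc p s) :=
  rfl

lemma riskBelief_congr [Fintype S] {n : ℕ} {acts acts' : ℕ → A} {obs obs' : ℕ → O}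
    (ha : ∀ t < n, acts t = acts' t) (ho : ∀ t < n, obs t = obs' t) (s : S) :
    riskBelief μ Ttr Oem Oref rew γ n acts obs s =
      riskBelief μ Ttr Oem Oref rew γ n acts' obs' s := by
  simp only [riskBelief, fun t : Fin n => ha t t.isLt, fun t : Fin n => ho t t.isLt]

lemma pathWeight_nonneg {n : ℕ} (hμ0 : ∀ s, 0 ≤ μ s)
    (hT0 : ∀ h, h < n → ∀ a s s', 0 ≤ Ttr h a s s') (hO0 : ∀ t, t < n → ∀ o s, 0 ≤ Oem t o s)
    (hOref0 : ∀ o, 0 ≤ Oref o) (acts : ℕ → A) (obs : ℕ → O) (q : Fin (n + 1) → S) :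
    0 ≤ pathWeight μ Ttr Oem Oref rew γ acts obs q :=
  mul_nonneg (mul_nonneg (hμ0 _) (prod_nonneg fun t _ => hT0 t t.isLt _ _ _))
    (mul_nonneg (prod_nonneg fun t _ => div_nonneg (hO0 t t.isLt _ _) (hOref0 _))
      (Real.exp_pos _).le)

lemma pathWeight_pos {n : ℕ} {acts : ℕ → A} {q : Fin (n + 1) → S} (hμ : 0 < μ (q 0))
    (hT : ∀ t : Fin n, 0 < Ttr t (acts t) (q t.castSucc) (q t.succ))
    (hO0 : ∀ t, t < n → ∀ o s, 0 < Oem t o s) (hOref0 : ∀ o, 0 < Oref o) (obs : ℕ → O) :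
    0 < pathWeight μ Ttr Oem Oref rew γ acts obs q :=
  mul_pos (mul_pos hμ (prod_pos fun t _ => hT t))
    (mul_pos (prod_pos fun t _ => div_pos (hO0 t t.isLt _ _) (hOref0 _)) (Real.exp_pos _))

lemma exists_pos_path [Fintype S] {n : ℕ} (hμ1 : ∑ s, μ s = 1)
    (hT1 : ∀ h, h < n → ∀ a s, ∑ s', Ttr h a s s' = 1) (acts : ℕ → A) :
    ∃ q : Fin (n + 1) → S,
      0 < μ (q 0) ∧ ∀ t : Fin n, 0 < Ttr t (acts t) (q t.castSucc) (q t.succ) := by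
  obtain ⟨s₀, hs₀⟩ := exists_pos_of_sum_eq_one hμ1
  choose next hnext using fun t s =>
    if ht : t < n then (exists_pos_of_sum_eq_one (hT1 t ht (acts t) s)).imp fun _ h _ => h
    else ⟨s, fun h => absurd h ht⟩
  let path : ℕ → S := fun t => Nat.rec s₀ next t
  exact ⟨fun i => path i, hs₀, fun t => hnext t (path t) t.isLt⟩

lemma sum_riskBelief_pos [Fintype S] {n : ℕ} (hμ0 : ∀ s, 0 ≤ μ s) (hμ1 : ∑ s, μ s = 1)
    (hT0 : ∀ h, h < n → ∀ a s s', 0 ≤ Ttr h a s s')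
    (hT1 : ∀ h, h < n → ∀ a s, ∑ s', Ttr h a s s' = 1)
    (hO0 : ∀ t, t < n → ∀ o s, 0 < Oem t o s) (hOref0 : ∀ o, 0 < Oref o)
    (acts : ℕ → A) (obs : ℕ → O) :
    0 < ∑ s, riskBelief μ Ttr Oem Oref rew γ n acts obs s := by
  obtain ⟨q, hq0, hqT⟩ := exists_pos_path hμ1 hT1 acts
  have hw := pathWeight_nonneg (rew := rew) (γ := γ) hμ0 hT0
    (fun t ht o s => (hO0 t ht o s).le) (fun o => (hOref0 o).le) acts obs
  simp only [riskBelief_eq_sum_pathWeight]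
  refine sum_pos' (fun s _ => sum_nonneg fun p _ => hw _) ⟨q (Fin.last n), mem_univ _, ?_⟩
  refine sum_pos' (fun p _ => hw _) ⟨Fin.init q, mem_univ _, ?_⟩
  rw [Fin.snoc_init_self]
  exact pathWeight_pos hq0 hqT hO0 hOref0 obs

end Model

def riskBackup [Fintype O] (γ : ℝ) (c v : O → ℝ) : ℝ :=
  1 / γ * Real.log (∑ o, c o * Real.exp (γ * v o))

lemma riskBackup_mono [Fintype O] [Nonempty O] (γ : ℝ) {c v w : O → ℝ} (hc : ∀ o, 0 < c o)
    (hvw : ∀ o, v o ≤ w o) : riskBackup γ c v ≤ riskBackup γ c w := by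
  have hpos (u : O → ℝ) : 0 < ∑ o, c o * Real.exp (γ * u o) :=
    sum_pos (fun o _ => mul_pos (hc o) (Real.exp_pos _)) univ_nonempty
  have hsum {u u' : O → ℝ} (h : ∀ o, γ * u o ≤ γ * u' o) :
      Real.log (∑ o, c o * Real.exp (γ * u o)) ≤ Real.log (∑ o, c o * Real.exp (γ * u' o)) :=
    Real.log_le_log (hpos u) <| sum_le_sum fun o _ =>
      mul_le_mul_of_nonneg_left (Real.exp_le_exp.2 (h o)) (hc o).le
  rcases lt_trichotomy γ 0 with hγ | rfl | hγ
  · exact mul_le_mul_of_nonpos_left (hsum fun o => mul_le_mul_of_nonpos_left (hvw o) hγ.le)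
      (one_div_neg.2 hγ).le
  · simp [riskBackup]
  · exact mul_le_mul_of_nonneg_left (hsum fun o => mul_le_mul_of_nonneg_left (hvw o) hγ.le)
      (one_div_pos.2 hγ).le

lemma sum_pi_fin_succ {X M : Type*} [Fintype X] [AddCommMonoid M] {k : ℕ}
    (F : (Fin (k + 1) → X) → M) : ∑ x, F x = ∑ o, ∑ tail : Fin k → X, F (Fin.cons o tail) := by
  rw [← (Fin.consEquiv fun _ => X).sum_comp, Fintype.sum_prod_type]
  rfl

section Value

variable [Fintype S] [Fintype O] [Nonempty A] [Nonempty O] {μ : S → ℝ}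
  {Ttr : ℕ → A → S → S → ℝ} {Oem : ℕ → O → S → ℝ} {Oref : O → ℝ} {rew : ℕ → S → A → ℝ}
  {γ : ℝ} {H : ℕ}

lemma valueRaw_self (π : ℕ → (ℕ → A) → (ℕ → O) → A) (acts : ℕ → A) (obs : ℕ → O) :
    valueRaw μ Ttr Oem Oref rew γ H π H acts obs =
      ∑ s, riskBelief μ Ttr Oem Oref rew γ H acts obs s := by
  rw [valueRaw, Nat.sub_self, Fintype.sum_unique, univ_eq_empty, prod_empty, one_mul]
  exact sum_congr rfl fun s _ => riskBelief_congr (fun t ht => genAct_of_lt _ _ _ ht)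
    (fun t ht => splice_of_lt _ _ _ ht) s

lemma valueRaw_succ {m : ℕ} (hm : m < H) (π : ℕ → (ℕ → A) → (ℕ → O) → A) (acts : ℕ → A)
    (obs : ℕ → O) :
    valueRaw μ Ttr Oem Oref rew γ H π m acts obs =
      ∑ o, Oref o * valueRaw μ Ttr Oem Oref rew γ H π (m + 1)
        (update acts m (polAct π acts obs m)) (update obs m o) := by
  obtain ⟨k, hk⟩ : ∃ k, H - m = k + 1 := ⟨H - (m + 1), by omega⟩
  have hk' : H - (m + 1) = k := by omega
  unfold valueRaw
  rw [hk', hk, sum_pi_fin_succ]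
  refine sum_congr rfl fun o _ => ?_
  rw [mul_sum]
  refine sum_congr rfl fun tail _ => ?_
  have hpolAct : polAct π acts (splice (update obs m o) (m + 1) tail) m = polAct π acts obs m :=
    congrArg (π m _) <| truncSeq_congr fun t ht => by
      rw [splice_of_lt _ _ _ (by omega), update_of_ne ht.ne]
  rw [splice_cons, ← hpolAct, genAct_update_polAct, Fin.prod_univ_succ, mul_assoc]
  simp only [Fin.cons_zero, Fin.cons_succ]

lemma valueRaw_pos (hμ0 : ∀ s, 0 ≤ μ s) (hμ1 : ∑ s, μ s = 1)
    (hT0 : ∀ h, h < H → ∀ a s s', 0 ≤ Ttr h a s s')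
    (hT1 : ∀ h, h < H → ∀ a s, ∑ s', Ttr h a s s' = 1)
    (hO0 : ∀ t, t < H → ∀ o s, 0 < Oem t o s) (hOref0 : ∀ o, 0 < Oref o)
    (π : ℕ → (ℕ → A) → (ℕ → O) → A) (m : ℕ) (acts : ℕ → A) (obs : ℕ → O) :
    0 < valueRaw μ Ttr Oem Oref rew γ H π m acts obs :=
  sum_pos (fun _ _ => mul_pos (prod_pos fun _ _ => hOref0 _)
    (sum_riskBelief_pos hμ0 hμ1 hT0 hT1 hO0 hOref0 _ _)) univ_nonempty

variable (μ Ttr Oem Oref rew γ H) in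
def policyValue (π : ℕ → (ℕ → A) → (ℕ → O) → A) (m : ℕ) (acts : ℕ → A) (obs : ℕ → O) : ℝ :=
  1 / γ * Real.log (valueRaw μ Ttr Oem Oref rew γ H π m acts obs)

lemma policyValue_self (π : ℕ → (ℕ → A) → (ℕ → O) → A) (acts : ℕ → A) (obs : ℕ → O) :
    policyValue μ Ttr Oem Oref rew γ H π H acts obs =
      1 / γ * Real.log (∑ s, riskBelief μ Ttr Oem Oref rew γ H acts obs s) := by
  rw [policyValue, valueRaw_self]

lemma policyValue_of_lt
    (hpos : ∀ π m acts obs, 0 < valueRaw μ Ttr Oem Oref rew γ H π m acts obs) {m : ℕ}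
    (hm : m < H) (π : ℕ → (ℕ → A) → (ℕ → O) → A) (acts : ℕ → A) (obs : ℕ → O) :
    policyValue μ Ttr Oem Oref rew γ H π m acts obs =
      riskBackup γ Oref fun o => policyValue μ Ttr Oem Oref rew γ H π (m + 1)
        (update acts m (polAct π acts obs m)) (update obs m o) := by
  rcases eq_or_ne γ 0 with rfl | hγ
  · simp [policyValue, riskBackup] -- both sides vanish, as `1 / 0 = 0`
  rw [policyValue, valueRaw_succ hm, riskBackup]
  congr 2
  refine sum_congr rfl fun o _ => ?_
  rw [policyValue, ← mul_assoc, mul_one_div_cancel hγ, one_mul, Real.exp_log (hpos _ _ _ _)]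

end Value

lemma update_eq_update_of_lt {X : Type*} {f g : ℕ → X} {m : ℕ} (h : ∀ t < m, f t = g t)
    (x : X) : ∀ t < m + 1, update f m x t = update g m x t := by
  intro t ht
  rcases eq_or_ne t m with rfl | hne
  · simp
  · rw [update_of_ne hne, update_of_ne hne, h t (by omega)]

section Optimality

variable [Fintype S] [Fintype O] [Fintype A] [Nonempty A] {μ : S → ℝ}
  {Ttr : ℕ → A → S → S → ℝ} {Oem : ℕ → O → S → ℝ} {Oref : O → ℝ} {rew : ℕ → S → A → ℝ}
  {γ : ℝ} {H : ℕ}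

variable (μ Ttr Oem Oref rew γ H) in
def optValue (m : ℕ) (acts : ℕ → A) (obs : ℕ → O) : ℝ :=
  if m < H then
    univ.sup' univ_nonempty fun a =>
      riskBackup γ Oref fun o => optValue (m + 1) (update acts m a) (update obs m o)
  else 1 / γ * Real.log (∑ s, riskBelief μ Ttr Oem Oref rew γ H acts obs s)
termination_by H - m

variable (μ Ttr Oem Oref rew γ H) in
def greedyPolicy (m : ℕ) (acts : ℕ → A) (obs : ℕ → O) : A :=
  (exists_mem_eq_sup' univ_nonempty fun a => riskBackup γ Oref fun o =>
    optValue μ Ttr Oem Oref rew γ H (m + 1) (update acts m a) (update obs m o)).choose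

lemma optValue_self (acts : ℕ → A) (obs : ℕ → O) :
    optValue μ Ttr Oem Oref rew γ H H acts obs =
      1 / γ * Real.log (∑ s, riskBelief μ Ttr Oem Oref rew γ H acts obs s) := by
  rw [optValue, if_neg H.lt_irrefl]

lemma optValue_of_lt {m : ℕ} (hm : m < H) (acts : ℕ → A) (obs : ℕ → O) :
    optValue μ Ttr Oem Oref rew γ H m acts obs =
      univ.sup' univ_nonempty fun a => riskBackup γ Oref fun o =>
        optValue μ Ttr Oem Oref rew γ H (m + 1) (update acts m a) (update obs m o) := by
  rw [optValue, if_pos hm]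

lemma optValue_congr {m : ℕ} (hm : m ≤ H) {acts acts' : ℕ → A} {obs obs' : ℕ → O}
    (ha : ∀ t < m, acts t = acts' t) (ho : ∀ t < m, obs t = obs' t) :
    optValue μ Ttr Oem Oref rew γ H m acts obs = optValue μ Ttr Oem Oref rew γ H m acts' obs' := by
  induction hm using Nat.decreasingInduction generalizing acts acts' obs obs' with
  | self => simp only [optValue_self, riskBelief_congr ha ho]
  | of_succ m hm ih =>
    simp only [optValue_of_lt hm,
      ih (update_eq_update_of_lt ha _) (update_eq_update_of_lt ho _)]

lemma riskBackup_greedyPolicy [Nonempty O] {m : ℕ} (hm : m < H) (acts : ℕ → A) (obs : ℕ → O) :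
    (riskBackup γ Oref fun o => optValue μ Ttr Oem Oref rew γ H (m + 1)
      (update acts m (polAct (greedyPolicy μ Ttr Oem Oref rew γ H) acts obs m)) (update obs m o))
      = optValue μ Ttr Oem Oref rew γ H m acts obs := by
  let Q (acts : ℕ → A) (obs : ℕ → O) (a : A) : ℝ := riskBackup γ Oref fun o =>
    optValue μ Ttr Oem Oref rew γ H (m + 1) (update acts m a) (update obs m o)
  -- the greedy policy sees only the truncated history, on which the Q-values are the same
  have hQ : Q (truncSeq acts m) (truncSeq obs m) = Q acts obs := funext fun a =>
    congrArg (riskBackup γ Oref) <| funext fun o => optValue_congr hm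
      (update_eq_update_of_lt (truncSeq_of_lt acts m) a)
      (update_eq_update_of_lt (truncSeq_of_lt obs m) o)
  have hgreedy :=
    (exists_mem_eq_sup' univ_nonempty (Q (truncSeq acts m) (truncSeq obs m))).choose_spec.2
  rw [optValue_of_lt hm]
  change Q acts obs _ = univ.sup' univ_nonempty (Q acts obs)
  rw [← hQ]
  exact hgreedy.symm

lemma policyValue_le_optValue [Nonempty O]
    (hpos : ∀ π m acts obs, 0 < valueRaw μ Ttr Oem Oref rew γ H π m acts obs)
    (hOref0 : ∀ o, 0 < Oref o) (π : ℕ → (ℕ → A) → (ℕ → O) → A) {m : ℕ} (hm : m ≤ H)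
    (acts : ℕ → A) (obs : ℕ → O) :
    policyValue μ Ttr Oem Oref rew γ H π m acts obs ≤
      optValue μ Ttr Oem Oref rew γ H m acts obs := by
  induction hm using Nat.decreasingInduction generalizing acts obs with
  | self => rw [policyValue_self, optValue_self]
  | of_succ m hm ih =>
    rw [policyValue_of_lt hpos hm, optValue_of_lt hm]
    refine (riskBackup_mono γ hOref0 fun o => ih _ _).trans ?_
    exact le_sup' (fun a => riskBackup γ Oref fun o => optValue μ Ttr Oem Oref rew γ H (m + 1)
      (update acts m a) (update obs m o)) (mem_univ _)

lemma policyValue_greedyPolicy [Nonempty O]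
    (hpos : ∀ π m acts obs, 0 < valueRaw μ Ttr Oem Oref rew γ H π m acts obs) {m : ℕ}
    (hm : m ≤ H) (acts : ℕ → A) (obs : ℕ → O) :
    policyValue μ Ttr Oem Oref rew γ H (greedyPolicy μ Ttr Oem Oref rew γ H) m acts obs =
      optValue μ Ttr Oem Oref rew γ H m acts obs := by
  induction hm using Nat.decreasingInduction generalizing acts obs with
  | self => rw [policyValue_self, optValue_self]
  | of_succ m hm ih =>
    rw [policyValue_of_lt hpos hm]
    simp only [ih]
    exact riskBackup_greedyPolicy hm acts obs

lemma isGreatest_optValue [Nonempty O]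
    (hpos : ∀ π m acts obs, 0 < valueRaw μ Ttr Oem Oref rew γ H π m acts obs)
    (hOref0 : ∀ o, 0 < Oref o) {m : ℕ} (hm : m ≤ H) (acts : ℕ → A) (obs : ℕ → O) :
    IsGreatest {x | ∃ π, x = policyValue μ Ttr Oem Oref rew γ H π m acts obs}
      (optValue μ Ttr Oem Oref rew γ H m acts obs) :=
  ⟨⟨greedyPolicy μ Ttr Oem Oref rew γ H, (policyValue_greedyPolicy hpos hm acts obs).symm⟩,
    by rintro _ ⟨π, rfl⟩; exact policyValue_le_optValue hpos hOref0 π hm acts obs⟩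

end Optimality

theorem bellman_optimality_equations_general
    [Fintype S] [Fintype O] [Fintype A] [Nonempty O] [Nonempty A]
    (H : ℕ) (γ : ℝ)
    (μ : S → ℝ) (Ttr : ℕ → A → S → S → ℝ) (Oem : ℕ → O → S → ℝ) (Oref : O → ℝ)
    (rew : ℕ → S → A → ℝ)
    (hμ0 : ∀ s, 0 ≤ μ s) (hμ1 : ∑ s, μ s = 1)
    (hT0 : ∀ h, h < H → ∀ a s s', 0 ≤ Ttr h a s s')
    (hT1 : ∀ h, h < H → ∀ a s, ∑ s', Ttr h a s s' = 1)
    (hO0 : ∀ t, t < H → ∀ o s, 0 < Oem t o s)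
    (hOref0 : ∀ o, 0 < Oref o) :
    (∀ m, m ≤ H → ∀ (acts : ℕ → A) (obs : ℕ → O),
      ∃ x, IsGreatest {x : ℝ | ∃ π : ℕ → (ℕ → A) → (ℕ → O) → A,
        x = (1 / γ) * Real.log (valueRaw μ Ttr Oem Oref rew γ H π m acts obs)} x) ∧
    (∀ Vstar : ℕ → (ℕ → A) → (ℕ → O) → ℝ,
      (∀ m, m ≤ H → ∀ (acts : ℕ → A) (obs : ℕ → O),
        IsGreatest {x : ℝ | ∃ π : ℕ → (ℕ → A) → (ℕ → O) → A,
          x = (1 / γ) * Real.log (valueRaw μ Ttr Oem Oref rew γ H π m acts obs)}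
          (Vstar m acts obs)) →
      (∀ (acts : ℕ → A) (obs : ℕ → O),
        Vstar H acts obs =
          (1 / γ) * Real.log (∑ s : S, riskBelief μ Ttr Oem Oref rew γ H acts obs s)) ∧
      (∀ m, m < H → ∀ (acts : ℕ → A) (obs : ℕ → O),
        Vstar m acts obs =
          Finset.univ.sup' Finset.univ_nonempty (fun a : A =>
            (1 / γ) * Real.log (∑ o : O, Oref o *
              Real.exp (γ * Vstar (m + 1) (Function.update acts m a)
                (Function.update obs m o)))))) := by
  have hpos := valueRaw_pos (rew := rew) (γ := γ) hμ0 hμ1 hT0 hT1 hO0 hOref0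
  have hopt m (hm : m ≤ H) acts obs := isGreatest_optValue hpos hOref0 hm acts obs
  refine ⟨fun m hm acts obs => ⟨_, hopt m hm acts obs⟩, fun Vstar hV => ?_⟩
  have hVstar m (hm : m ≤ H) acts obs :
      Vstar m acts obs = optValue μ Ttr Oem Oref rew γ H m acts obs :=
    (hV m hm acts obs).unique (hopt m hm acts obs)
  refine ⟨fun acts obs => by rw [hVstar H le_rfl, optValue_self], fun m hm acts obs => ?_⟩
  rw [hVstar m hm.le, optValue_of_lt hm]
  simp only [hVstar (m + 1) hm]
  rfl

/-- Bellman optimality equations: the optimal value `V*_h(f_h) = max_π V^π_h(f_h)`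
(a maximum over deterministic policies, which exists) satisfies
`V*_{H+1}(f_{H+1}) = (1/γ)·ln ∑_s σ_{H+1}(s; f_{H+1})` and, for `h ∈ {1,…,H}`,
`V*_h(f_h) = max_{a∈A} (1/γ)·ln ∑_o O'(o)·exp(γ·V*_{h+1}(f_h,a,o))`; in particular a
greedy deterministic history-dependent policy attains the globally optimal value
(paper step `h` is index `m = h - 1`). -/
theorem bellman_optimality_equations
    [Fintype S] [Fintype O] [Fintype A] [Nonempty S] [Nonempty O] [Nonempty A]
    (H : ℕ) (hH : 1 ≤ H) (γ : ℝ) (hγ : γ ≠ 0)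
    (μ : S → ℝ) (Ttr : ℕ → A → S → S → ℝ) (Oem : ℕ → O → S → ℝ) (Oref : O → ℝ)
    (rew : ℕ → S → A → ℝ)
    (hμ0 : ∀ s, 0 ≤ μ s) (hμ1 : ∑ s, μ s = 1)
    (hT0 : ∀ h, h < H → ∀ a s s', 0 ≤ Ttr h a s s')
    (hT1 : ∀ h, h < H → ∀ a s, ∑ s', Ttr h a s s' = 1)
    (hO0 : ∀ t, t < H → ∀ o s, 0 < Oem t o s)
    (hO1 : ∀ t, t < H → ∀ s, ∑ o, Oem t o s = 1)
    (hOref0 : ∀ o, 0 < Oref o) (hOref1 : ∑ o, Oref o = 1)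
    (hr : ∀ h, h < H → ∀ s a, rew h s a ∈ Set.Icc (0 : ℝ) 1) :
    (∀ m, m ≤ H → ∀ (acts : ℕ → A) (obs : ℕ → O),
      ∃ x, IsGreatest {x : ℝ | ∃ π : ℕ → (ℕ → A) → (ℕ → O) → A,
        x = (1 / γ) * Real.log (valueRaw μ Ttr Oem Oref rew γ H π m acts obs)} x) ∧
    (∀ Vstar : ℕ → (ℕ → A) → (ℕ → O) → ℝ,
      (∀ m, m ≤ H → ∀ (acts : ℕ → A) (obs : ℕ → O),
        IsGreatest {x : ℝ | ∃ π : ℕ → (ℕ → A) → (ℕ → O) → A,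
          x = (1 / γ) * Real.log (valueRaw μ Ttr Oem Oref rew γ H π m acts obs)}
          (Vstar m acts obs)) →
      (∀ (acts : ℕ → A) (obs : ℕ → O),
        Vstar H acts obs =
          (1 / γ) * Real.log (∑ s : S, riskBelief μ Ttr Oem Oref rew γ H acts obs s)) ∧
      (∀ m, m < H → ∀ (acts : ℕ → A) (obs : ℕ → O),
        Vstar m acts obs =
          Finset.univ.sup' Finset.univ_nonempty (fun a : A =>
            (1 / γ) * Real.log (∑ o : O, Oref o *
              Real.exp (γ * Vstar (m + 1) (Function.update acts m a)
                (Function.update obs m o)))))) :=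
  bellman_optimality_equations_general H γ μ Ttr Oem Oref rew hμ0 hμ1 hT0 hT1 hO0 hOref0

end
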